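/- arXiv:1102.0421 — 4 statements merged into one kernel-verified Lean document; each statement's English description precedes it below -/
import Mathlib

section
/- Let X, Y be Banach spaces, P a topological space, and H : X × P →→ Y a set-valued map with (x̄,p̄,0) ∈ Gr H that is inner semicontinuous at (x̄,p̄,0). Suppose H is open with linear rate c > 0 with respect to x uniformly in p around (x̄,p̄,0): there exist ε > 0 and neighborhoods U of x̄, V of p̄, W of 0 in Y such that for every ρ ∈ (0,ε), every p ∈ V and every (x,y) ∈ Gr H_p ∩ (U × W), one has B(y, ρc) ⊆ H_p(B(x,ρ)). Then there exist r₀ > 0 and a neighborhood U' of p̄ such that d(x, S(p)) ≤ c⁻¹ · d(0, H(x,p)) for every (x,p) ∈ B(x̄,r₀) × U', where S(p) = {x : 0 ∈ H(x,p)}. -/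
/-!
Fix `(x, p)` near `(x₀, p₀)`. If `y ∈ H(x, p)` is small, openness at every radius `ρ > ‖y‖ / c`
puts `0` in `H_p(B(x, ρ))`, so `d(x, S(p)) ≤ ‖y‖ / c`. Inner semicontinuity provides one
such small `y`, which bounds `d(x, S(p))` also against the large points of `H(x, p)`;
taking the infimum over `y` gives the estimate.
-/

open EMetric Metric Filter

theorem infEDist_setOf_mem_le_of_ball_subset {X Y : Type*} [PseudoMetricSpace X]
    [PseudoMetricSpace Y] {F : X → Set Y} {x : X} {y z : Y} {c ε : ℝ} (hc : 0 < c)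
    (hz : dist z y < ε * c)
    (hF : ∀ ρ, 0 < ρ → ρ < ε → ball y (ρ * c) ⊆ ⋃ u ∈ ball x ρ, F u) :
    infEDist x {u | z ∈ F u} ≤ ENNReal.ofReal (c⁻¹ * dist z y) := by
  have hzε : c⁻¹ * dist z y < ε := by
    rwa [inv_mul_lt_iff₀ hc, mul_comm]
  have hρ_bound : ∀ ρ ∈ Set.Ioo (c⁻¹ * dist z y) ε,
      infEDist x {u | z ∈ F u} ≤ ENNReal.ofReal ρ := by
    rintro ρ ⟨hzρ, hρε⟩
    have hρ : 0 < ρ := (by positivity : 0 ≤ c⁻¹ * dist z y).trans_lt hzρ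
    have hz_ball : z ∈ ball y (ρ * c) := by
      rwa [Metric.mem_ball, mul_comm, ← inv_mul_lt_iff₀ hc]
    obtain ⟨u, hu, hzu⟩ := Set.mem_iUnion₂.1 (hF ρ hρ hρε hz_ball)
    calc infEDist x {u | z ∈ F u} ≤ edist x u := infEDist_le_edist_of_mem hzu
      _ ≤ ENNReal.ofReal ρ := by
        rw [edist_dist, dist_comm]
        exact ENNReal.ofReal_le_ofReal (Metric.mem_ball.1 hu).le
  exact ge_of_tendsto (ENNReal.continuous_ofReal.continuousWithinAt.tendsto)
    (eventually_of_mem (Ioo_mem_nhdsGT hzε) hρ_bound)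

/-- One point of `A` within `δ` of `z` bounds the left side for all the far points of `A`. -/
theorem infEDist_le_ofReal_mul_infEDist_of_forall_dist_lt {X Y : Type*}
    [PseudoEMetricSpace X] [PseudoMetricSpace Y] {S : Set X} {A : Set Y} {x : X} {z : Y}
    {k δ : ℝ} (hk : 0 < k) (hA : ∃ y ∈ A, dist z y < δ)
    (hbound : ∀ y ∈ A, dist z y < δ → infEDist x S ≤ ENNReal.ofReal (k * dist z y)) :
    infEDist x S ≤ ENNReal.ofReal k * infEDist z A := by
  have hk₀ : ENNReal.ofReal k ≠ 0 := ENNReal.ofReal_ne_zero_iff.2 hk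
  obtain ⟨y₀, hy₀A, hy₀⟩ := hA
  have hpoint : ∀ y ∈ A, infEDist x S ≤ ENNReal.ofReal (k * dist z y) := by
    intro y hyA
    by_cases hy : dist z y < δ
    · exact hbound y hyA hy
    · calc infEDist x S ≤ ENNReal.ofReal (k * dist z y₀) := hbound y₀ hy₀A hy₀
        _ ≤ ENNReal.ofReal (k * dist z y) := by gcongr; linarith
  rw [mul_comm, ← ENNReal.div_le_iff_le_mul (.inl hk₀) (.inl ENNReal.ofReal_ne_top),
    le_infEDist]
  intro y hyA
  rw [ENNReal.div_le_iff_le_mul (.inl hk₀) (.inl ENNReal.ofReal_ne_top), mul_comm,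
    edist_dist, ← ENNReal.ofReal_mul hk.le]
  exact hpoint y hyA

theorem metric_regularity_from_uniform_openness_general
    {X Y P : Type*} [NormedAddCommGroup X]
    [NormedAddCommGroup Y] [TopologicalSpace P]
    (H : X → P → Set Y) (x₀ : X) (p₀ : P) (c : ℝ) (hc : 0 < c)
    (hisc : ∀ D : Set Y, IsOpen D → (0 : Y) ∈ D →
      ∃ U ∈ nhds x₀, ∃ V ∈ nhds p₀, ∀ x ∈ U, ∀ p ∈ V, (H x p ∩ D).Nonempty)
    (hopen : ∃ ε > 0, ∃ U ∈ nhds x₀, ∃ V ∈ nhds p₀, ∃ W ∈ nhds (0 : Y),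
      ∀ ρ : ℝ, 0 < ρ → ρ < ε → ∀ p ∈ V, ∀ x ∈ U, ∀ y ∈ W, y ∈ H x p →
        Metric.ball y (ρ * c) ⊆ ⋃ u ∈ Metric.ball x ρ, H u p) :
    ∃ r₀ > 0, ∃ U' ∈ nhds p₀, ∀ x ∈ Metric.ball x₀ r₀, ∀ p ∈ U',
      infEdist x {u : X | 0 ∈ H u p} ≤
        ENNReal.ofReal c⁻¹ * infEdist (0 : Y) (H x p) := by
  obtain ⟨ε, hε, U, hU, V, hV, W, hW, hop⟩ := hopen
  obtain ⟨δ, hδ, hδW⟩ := Metric.mem_nhds_iff.1 hW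
  set δ' := min δ (ε * c)
  obtain ⟨U₁, hU₁, V₁, hV₁, hsmall⟩ :=
    hisc (ball 0 δ') isOpen_ball (mem_ball_self (by positivity))
  obtain ⟨r₀, hr₀, hr₀U⟩ := Metric.mem_nhds_iff.1 (inter_mem hU hU₁)
  refine ⟨r₀, hr₀, V ∩ V₁, inter_mem hV hV₁, fun x hx p ⟨hpV, hpV₁⟩ => ?_⟩
  obtain ⟨hxU, hxU₁⟩ := hr₀U hx
  obtain ⟨y₀, hy₀H, hy₀⟩ := hsmall x hxU₁ p hpV₁
  refine infEDist_le_ofReal_mul_infEDist_of_forall_dist_lt (inv_pos.2 hc)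
    ⟨y₀, hy₀H, mem_ball'.1 hy₀⟩ fun y hyH hy => ?_
  have hyW : y ∈ W := hδW (mem_ball'.2 (hy.trans_le (min_le_left _ _)))
  exact infEDist_setOf_mem_le_of_ball_subset hc (hy.trans_le (min_le_right _ _))
    fun ρ hρ hρε => hop ρ hρ hρε p hpV x hxU y hyW hyH

/-- Metric regularity of the implicit multifunction from uniform linear openness:
if `H` is inner semicontinuous at `(x₀,p₀,0)` and open at linear rate `c > 0` with
respect to `x` uniformly in `p` around `(x₀,p₀,0)`, then
`d(x, S(p)) ≤ c⁻¹ · d(0, H(x,p))` for all `(x,p)` near `(x₀,p₀)`, where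
`S(p) = {x | 0 ∈ H(x,p)}` and `d(·,∅) = ∞`. -/
theorem metric_regularity_from_uniform_openness
    {X Y P : Type*} [NormedAddCommGroup X] [NormedSpace ℝ X] [CompleteSpace X]
    [NormedAddCommGroup Y] [NormedSpace ℝ Y] [CompleteSpace Y] [TopologicalSpace P]
    (H : X → P → Set Y) (x₀ : X) (p₀ : P) (c : ℝ) (hc : 0 < c)
    (hgr : (0 : Y) ∈ H x₀ p₀)
    (hisc : ∀ D : Set Y, IsOpen D → (0 : Y) ∈ D →
      ∃ U ∈ nhds x₀, ∃ V ∈ nhds p₀, ∀ x ∈ U, ∀ p ∈ V, (H x p ∩ D).Nonempty)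
    (hopen : ∃ ε > 0, ∃ U ∈ nhds x₀, ∃ V ∈ nhds p₀, ∃ W ∈ nhds (0 : Y),
      ∀ ρ : ℝ, 0 < ρ → ρ < ε → ∀ p ∈ V, ∀ x ∈ U, ∀ y ∈ W, y ∈ H x p →
        Metric.ball y (ρ * c) ⊆ ⋃ u ∈ Metric.ball x ρ, H u p) :
    ∃ r₀ > 0, ∃ U' ∈ nhds p₀, ∀ x ∈ Metric.ball x₀ r₀, ∀ p ∈ U',
      infEdist x {u : X | 0 ∈ H u p} ≤
        ENNReal.ofReal c⁻¹ * infEdist (0 : Y) (H x p) :=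
  metric_regularity_from_uniform_openness_general H x₀ p₀ c hc hisc hopen
end

section
/- Let X, Y be Banach spaces and P a metric space, and let H : X × P →→ Y be inner semicontinuous at (x̄,p̄,0) ∈ Gr H and open with linear rate c > 0 with respect to x uniformly in p around (x̄,p̄,0). Then there exist r̄, t̄ > 0 such that for every (x,p) ∈ B(x̄,r̄) × B(p̄,t̄), d((p,x), Gr S) ≤ (1 + c⁻¹) · d((x,p,0), Gr H), where S(p) = {x : 0 ∈ H(x,p)}, Gr S ⊆ P × X, Gr H ⊆ X × P × Y, and all product spaces carry sum metrics. -/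
open Metric
open scoped ENNReal

/-! Take a graph point `(x', p', y')` of `H` almost realising `d((x,p,0), Gr H)`. For `(x,p)` close
to `(x₀,p₀)` it lies where `H` is open at rate `c`, so `0 ∈ H(u, p')` for some `u` with
`d(x', u)` barely above `‖y'‖ / c`. Then `(p', u) ∈ Gr S` and
`d(p,p') + d(x,u) ≲ d(p,p') + d(x,x') + ‖y'‖/c ≤ (1 + c⁻¹)·(d(x,x') + d(p,p') + ‖y'‖)`. -/

theorem ENNReal.le_mul_iInf_of_forall_lt {ι : Type*} {f : ι → ℝ≥0∞} {g K T : ℝ≥0∞}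
    (hK₀ : K ≠ 0) (hK : K ≠ ∞) (hf : ⨅ i, f i < T) (hg : ∀ i, f i < T → g ≤ K * f i) :
    g ≤ K * ⨅ i, f i := by
  have hmin : min g (K * T) ≤ K * ⨅ i, f i := by
    rw [ENNReal.mul_iInf_of_ne hK₀ hK]
    refine le_iInf fun i => ?_
    rcases lt_or_ge (f i) T with hi | hi
    · exact min_le_of_left_le (hg i hi)
    · exact min_le_of_right_le (by gcongr)
  have hlt : K * ⨅ i, f i < K * T := ENNReal.mul_lt_mul_right hK₀ hK hf
  have hgT : g < K * T := by
    simpa [lt_irrefl] using min_lt_iff.mp (hmin.trans_lt hlt)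
  rwa [min_eq_left hgT.le] at hmin

section GraphDistance

variable {X P Y : Type*} [PseudoMetricSpace X] [PseudoMetricSpace P] [PseudoMetricSpace Y] [Zero Y]

/-- `d((p, x), Gr S)` for the solution map `S p = {x | 0 ∈ H x p}`, in the sum metric. -/
noncomputable def solutionGraphEdist (H : X → P → Set Y) (p : P) (x : X) : ℝ≥0∞ :=
  ⨅ z : {z : P × X // 0 ∈ H z.2 z.1}, (edist p z.1.1 + edist x z.1.2)

/-- `d((x, p, 0), Gr H)` in the sum metric. -/
noncomputable def graphEdist (H : X → P → Set Y) (x : X) (p : P) : ℝ≥0∞ :=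
  ⨅ w : {w : X × P × Y // w.2.2 ∈ H w.1 w.2.1},
    (edist x w.1.1 + edist p w.1.2.1 + edist (0 : Y) w.1.2.2)

def IsOpenWithRateOn (H : X → P → Set Y) (c ε : ℝ) (U : Set X) (V : Set P) (W : Set Y) : Prop :=
  ∀ ρ : ℝ, 0 < ρ → ρ < ε → ∀ p ∈ V, ∀ x ∈ U, ∀ y ∈ W, y ∈ H x p →
    ball y (ρ * c) ⊆ ⋃ u ∈ ball x ρ, H u p

variable {H : X → P → Set Y} {c ε : ℝ} {U : Set X} {V : Set P} {W : Set Y}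
  {x' : X} {p' : P} {y' : Y}

theorem IsOpenWithRateOn.solutionGraphEdist_le (hH : IsOpenWithRateOn H c ε U V W) (hc : 0 < c)
    (hx' : x' ∈ U) (hp' : p' ∈ V) (hy' : y' ∈ W) (hgr : y' ∈ H x' p') (hε : dist 0 y' / c < ε)
    (x : X) (p : P) :
    solutionGraphEdist H p x ≤ edist p p' + edist x x' + ENNReal.ofReal (dist 0 y' / c) := by
  refine ENNReal.le_of_forall_pos_le_add fun η hη _ => ?_
  obtain ⟨ρ, hρ_gt, hρ_lt⟩ := exists_between (lt_min hε (lt_add_of_pos_right _ hη))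
  have hρ : 0 < ρ := (div_nonneg dist_nonneg hc.le).trans_lt hρ_gt
  have h0 : (0 : Y) ∈ ball y' (ρ * c) := mem_ball.mpr ((div_lt_iff₀ hc).mp hρ_gt)
  obtain ⟨u, hu, hsol⟩ :=
    Set.mem_iUnion₂.mp (hH ρ hρ (hρ_lt.trans_le (min_le_left _ _)) p' hp' x' hx' y' hy' hgr h0)
  have hxu : edist x u ≤ edist x x' + ENNReal.ofReal ρ :=
    (edist_triangle x x' u).trans (by gcongr; exact (edist_lt_ofReal.mpr (mem_ball'.mp hu)).le)
  have hρη : ENNReal.ofReal ρ ≤ ENNReal.ofReal (dist 0 y' / c) + η := by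
    rw [← ENNReal.ofReal_coe_nnreal, ← ENNReal.ofReal_add (by positivity) (by positivity)]
    exact ENNReal.ofReal_le_ofReal (hρ_lt.trans_le (min_le_right _ _)).le
  calc solutionGraphEdist H p x ≤ edist p p' + edist x u := iInf_le_of_le ⟨(p', u), hsol⟩ le_rfl
    _ ≤ edist p p' + (edist x x' + (ENNReal.ofReal (dist 0 y' / c) + η)) := by
        gcongr; exact hxu.trans (by gcongr)
    _ = _ := by simp only [add_assoc]

theorem IsOpenWithRateOn.solutionGraphEdist_le_mul (hH : IsOpenWithRateOn H c ε U V W)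
    (hc : 0 < c) (hx' : x' ∈ U) (hp' : p' ∈ V) (hy' : y' ∈ W) (hgr : y' ∈ H x' p')
    (hε : dist 0 y' / c < ε) (x : X) (p : P) :
    solutionGraphEdist H p x ≤
      ENNReal.ofReal (1 + c⁻¹) * (edist x x' + edist p p' + edist (0 : Y) y') := by
  have hc' : 0 ≤ c⁻¹ := inv_nonneg.mpr hc.le
  calc solutionGraphEdist H p x
      ≤ edist p p' + edist x x' + ENNReal.ofReal (dist 0 y' / c) :=
        hH.solutionGraphEdist_le hc hx' hp' hy' hgr hε x p
    _ = ENNReal.ofReal (dist p p' + dist x x' + dist 0 y' / c) := by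
        rw [edist_dist, edist_dist, ← ENNReal.ofReal_add dist_nonneg dist_nonneg,
          ← ENNReal.ofReal_add (by positivity) (by positivity)]
    _ ≤ ENNReal.ofReal ((1 + c⁻¹) * (dist x x' + dist p p' + dist 0 y')) := by
        refine ENNReal.ofReal_le_ofReal ?_
        rw [div_eq_mul_inv]
        nlinarith [mul_nonneg hc'
            (add_nonneg (dist_nonneg (x := x) (y := x')) (dist_nonneg (x := p) (y := p'))),
          dist_nonneg (x := (0 : Y)) (y := y')]
    _ = _ := by
        simp only [ENNReal.ofReal_mul (by positivity : (0 : ℝ) ≤ 1 + c⁻¹), edist_dist,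
          ENNReal.ofReal_add, dist_nonneg, add_nonneg]

theorem IsOpenWithRateOn.solutionGraphEdist_le_mul_graphEdist
    (hH : IsOpenWithRateOn H c ε U V W) (hc : 0 < c) {x₀ : X} {p₀ : P} {r : ℝ}
    (hU : ball x₀ (3 * r) ⊆ U) (hV : ball p₀ (3 * r) ⊆ V) (hW : ball (0 : Y) (3 * r) ⊆ W)
    (hrε : 3 * r ≤ ε * c) (hgr : (0 : Y) ∈ H x₀ p₀) {x : X} {p : P}
    (hx : dist x x₀ < r) (hp : dist p p₀ < r) :
    solutionGraphEdist H p x ≤ ENNReal.ofReal (1 + c⁻¹) * graphEdist H x p := by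
  have hr : 0 < r := dist_nonneg.trans_lt hx
  -- graph points within `2 * r` of `(x, p, 0)` lie in the `3 * r`-balls where `H` is open
  refine ENNReal.le_mul_iInf_of_forall_lt (T := ENNReal.ofReal (2 * r))
    (by simp only [ne_eq, ENNReal.ofReal_eq_zero, not_le]; positivity) ENNReal.ofReal_ne_top ?_ ?_
  · calc graphEdist H x p ≤ edist x x₀ + edist p p₀ + edist (0 : Y) 0 :=
          iInf_le_of_le ⟨(x₀, p₀, 0), hgr⟩ le_rfl
      _ < ENNReal.ofReal (2 * r) := by
        rw [edist_self, add_zero, two_mul, ENNReal.ofReal_add hr.le hr.le]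
        exact ENNReal.add_lt_add (edist_lt_ofReal.mpr hx) (edist_lt_ofReal.mpr hp)
  · rintro ⟨⟨x', p', y'⟩, hw⟩ hlt
    have ha : dist x x' < 2 * r := edist_lt_ofReal.mp ((le_self_add.trans le_self_add).trans_lt hlt)
    have hb : dist p p' < 2 * r := edist_lt_ofReal.mp ((le_add_self.trans le_self_add).trans_lt hlt)
    have he : dist 0 y' < 2 * r := edist_lt_ofReal.mp (le_add_self.trans_lt hlt)
    have hx' : x' ∈ U := hU <| mem_ball.mpr <| by linarith [dist_triangle_left x' x₀ x]
    have hp' : p' ∈ V := hV <| mem_ball.mpr <| by linarith [dist_triangle_left p' p₀ p]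
    have hy' : y' ∈ W := hW <| mem_ball'.mpr <| by linarith
    refine hH.solutionGraphEdist_le_mul hc hx' hp' hy' hw ?_ x p
    rw [div_lt_iff₀ hc]
    linarith

end GraphDistance

theorem graphical_regularity_from_uniform_openness_general
    {X Y P : Type*} [NormedAddCommGroup X]
    [NormedAddCommGroup Y] [MetricSpace P]
    (H : X → P → Set Y) (x₀ : X) (p₀ : P) (c : ℝ) (hc : 0 < c)
    (hgr : (0 : Y) ∈ H x₀ p₀)
    (hopen : ∃ ε > 0, ∃ U ∈ nhds x₀, ∃ V ∈ nhds p₀, ∃ W ∈ nhds (0 : Y),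
      ∀ ρ : ℝ, 0 < ρ → ρ < ε → ∀ p ∈ V, ∀ x ∈ U, ∀ y ∈ W, y ∈ H x p →
        ball y (ρ * c) ⊆ ⋃ u ∈ ball x ρ, H u p) :
    ∃ r₁ > 0, ∃ t₁ > 0, ∀ x ∈ ball x₀ r₁, ∀ p ∈ ball p₀ t₁,
      (⨅ z : {z : P × X // 0 ∈ H z.2 z.1}, (edist p z.1.1 + edist x z.1.2)) ≤
        ENNReal.ofReal (1 + c⁻¹) *
          ⨅ w : {w : X × P × Y // w.2.2 ∈ H w.1 w.2.1},
            (edist x w.1.1 + edist p w.1.2.1 + edist (0 : Y) w.1.2.2) := by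
  obtain ⟨ε, hε, U, hU, V, hV, W, hW, hH⟩ := hopen
  obtain ⟨rU, hrU, hUb⟩ := Metric.mem_nhds_iff.mp hU
  obtain ⟨rV, hrV, hVb⟩ := Metric.mem_nhds_iff.mp hV
  obtain ⟨rW, hrW, hWb⟩ := Metric.mem_nhds_iff.mp hW
  set r := min (min rU rV) (min rW (ε * c)) / 3
  have hr₃ : 3 * r = min (min rU rV) (min rW (ε * c)) := by ring
  have hr : 0 < r := by positivity
  refine ⟨r, hr, r, hr, fun x hx p hp => ?_⟩
  exact IsOpenWithRateOn.solutionGraphEdist_le_mul_graphEdist hH hc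
    ((ball_subset_ball (hr₃ ▸ (min_le_left _ _).trans (min_le_left _ _))).trans hUb)
    ((ball_subset_ball (hr₃ ▸ (min_le_left _ _).trans (min_le_right _ _))).trans hVb)
    ((ball_subset_ball (hr₃ ▸ (min_le_right _ _).trans (min_le_left _ _))).trans hWb)
    (hr₃ ▸ (min_le_right _ _).trans (min_le_right _ _)) hgr hx hp

/-- Graphical regularity from uniform linear openness: if `P` is a metric space and
`H` is inner semicontinuous at `(x₀,p₀,0)` and open at linear rate `c > 0` with respect
to `x` uniformly in `p` around `(x₀,p₀,0)`, then
`d((p,x), Gr S) ≤ (1 + c⁻¹)·d((x,p,0), Gr H)` near `(x₀,p₀)`, where `S(p) = {x | 0 ∈ H(x,p)}`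
and the graph distances are taken with respect to sum metrics (with value `∞` for `∅`). -/
theorem graphical_regularity_from_uniform_openness
    {X Y P : Type*} [NormedAddCommGroup X] [NormedSpace ℝ X] [CompleteSpace X]
    [NormedAddCommGroup Y] [NormedSpace ℝ Y] [CompleteSpace Y] [MetricSpace P]
    (H : X → P → Set Y) (x₀ : X) (p₀ : P) (c : ℝ) (hc : 0 < c)
    (hgr : (0 : Y) ∈ H x₀ p₀)
    (hisc : ∀ D : Set Y, IsOpen D → (0 : Y) ∈ D →
      ∃ U ∈ nhds x₀, ∃ V ∈ nhds p₀, ∀ x ∈ U, ∀ p ∈ V, (H x p ∩ D).Nonempty)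
    (hopen : ∃ ε > 0, ∃ U ∈ nhds x₀, ∃ V ∈ nhds p₀, ∃ W ∈ nhds (0 : Y),
      ∀ ρ : ℝ, 0 < ρ → ρ < ε → ∀ p ∈ V, ∀ x ∈ U, ∀ y ∈ W, y ∈ H x p →
        ball y (ρ * c) ⊆ ⋃ u ∈ ball x ρ, H u p) :
    ∃ r₁ > 0, ∃ t₁ > 0, ∀ x ∈ ball x₀ r₁, ∀ p ∈ ball p₀ t₁,
      (⨅ z : {z : P × X // 0 ∈ H z.2 z.1}, (edist p z.1.1 + edist x z.1.2)) ≤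
        ENNReal.ofReal (1 + c⁻¹) *
          ⨅ w : {w : X × P × Y // w.2.2 ∈ H w.1 w.2.1},
            (edist x w.1.1 + edist p w.1.2.1 + edist (0 : Y) w.1.2.2) :=
  graphical_regularity_from_uniform_openness_general H x₀ p₀ c hc hgr hopen
end

section
/- Let K ⊆ Z be a closed convex cone with nonempty interior in a Banach space Z and e ∈ int K. Then the scalarization functional s_e(z) = inf{λ ∈ ℝ : λe ∈ z + K} is Lipschitz on Z with constant d(e, bd K)⁻¹, where bd K is the topological boundary of K: |s_e(z) − s_e(w)| ≤ d(e, bd K)⁻¹ · ‖z − w‖ for all z, w ∈ Z. -/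
/-!
A segment from `e ∈ K` to a point outside `K` crosses `frontier K`, so the closed ball of radius
`d = infDist e (frontier K)` about `e` lies in `K`. Scaling that ball by the cone property gives
`(d⁻¹ * ‖u‖) • e - u ∈ K` for every `u`, hence, by additivity of `K`,
`s_e(z) ≤ s_e(w) + d⁻¹ * ‖z - w‖`. The infima are finite because `-e ∉ K`: otherwise the same
membership would put every vector in `K`.
-/

/-- The Gerstewitz/Tammer scalarization functional `s_e(z) = inf {λ : λ•e - z ∈ K}`. -/
noncomputable def scalFn {Z : Type*} [NormedAddCommGroup Z] [NormedSpace ℝ Z]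
    (K : Set Z) (e : Z) (z : Z) : ℝ :=
  sInf {l : ℝ | l • e - z ∈ K}

open Metric Set

theorem IsPreconnected.inter_frontier_nonempty {α : Type*} [TopologicalSpace α] {s t : Set α}
    (hs : IsPreconnected s) (hst : (s ∩ t).Nonempty) (hst' : (s \ t).Nonempty) :
    (s ∩ frontier t).Nonempty := by
  rw [frontier_eq_closure_inter_closure]
  refine isPreconnected_closed_iff.1 hs _ _ isClosed_closure isClosed_closure ?_ ?_ ?_
  · exact fun x _ => (em (x ∈ t)).imp (subset_closure ·) (subset_closure ·)
  · exact hst.mono (inter_subset_inter_right _ subset_closure)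
  · exact hst'.mono (inter_subset_inter_right _ subset_closure)

section Frontier

variable {E : Type*} [NormedAddCommGroup E] [NormedSpace ℝ E] {s : Set E} {x : E}

theorem infDist_frontier_le_dist_of_mem_of_notMem {y : E} (hx : x ∈ s) (hy : y ∉ s) :
    infDist x (frontier s) ≤ dist x y := by
  obtain ⟨p, hp_seg, hp_fr⟩ := (convex_segment x y).isPreconnected.inter_frontier_nonempty
    ⟨x, left_mem_segment ℝ x y, hx⟩ ⟨y, right_mem_segment ℝ x y, hy⟩
  calc infDist x (frontier s) ≤ dist x p := infDist_le_dist_of_mem hp_fr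
    _ ≤ dist x y := mem_closedBall'.1 (segment_subset_closedBall_left x y hp_seg)

theorem ball_infDist_frontier_subset (hx : x ∈ s) : ball x (infDist x (frontier s)) ⊆ s :=
  fun _ hy => by_contra fun hy' =>
    (infDist_frontier_le_dist_of_mem_of_notMem hx hy').not_gt (mem_ball'.1 hy)

theorem closedBall_infDist_frontier_subset (hs : IsClosed s) (hx : x ∈ s) :
    closedBall x (infDist x (frontier s)) ⊆ s := by
  rcases eq_or_ne (infDist x (frontier s)) 0 with h | h
  · simpa [h] using hx
  · rw [← closure_ball x h]
    exact closure_minimal (ball_infDist_frontier_subset hx) hs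

theorem infDist_frontier_pos (hx : x ∈ interior s) (hs : s ≠ univ) :
    0 < infDist x (frontier s) := by
  have hne : (frontier s).Nonempty :=
    nonempty_frontier_iff.2 ⟨⟨x, interior_subset hx⟩, hs⟩
  exact (isClosed_frontier.notMem_iff_infDist_pos hne).1 fun h => h.2 hx

end Frontier

theorem add_mem_of_convex_of_smul_mem {Z : Type*} [AddCommGroup Z] [Module ℝ Z] {K : Set Z}
    (hconv : Convex ℝ K) (hsmul : ∀ t : ℝ, 0 ≤ t → ∀ z ∈ K, t • z ∈ K) {x y : Z}
    (hx : x ∈ K) (hy : y ∈ K) : x + y ∈ K := by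
  have hmid := hsmul 2 zero_le_two _ (hconv hx hy (by norm_num) (by norm_num) (add_halves 1))
  rwa [smul_add, smul_smul, smul_smul, mul_one_div_cancel two_ne_zero, one_smul, one_smul]
    at hmid

section Cone

variable {Z : Type*} [NormedAddCommGroup Z] [NormedSpace ℝ Z] {K : Set Z} {e : Z} {r : ℝ}

theorem smul_sub_mem_of_closedBall_subset (hsmul : ∀ t : ℝ, 0 ≤ t → ∀ z ∈ K, t • z ∈ K)
    (hr : 0 < r) (hball : closedBall e r ⊆ K) (u : Z) : (r⁻¹ * ‖u‖) • e - u ∈ K := by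
  rcases eq_or_ne u 0 with rfl | hu
  · simpa using hsmul 0 le_rfl e (hball (mem_closedBall_self hr.le))
  set c := r⁻¹ * ‖u‖
  have hc : 0 < c := mul_pos (inv_pos.2 hr) (norm_pos_iff.2 hu)
  have hmem : e - c⁻¹ • u ∈ closedBall e r := by
    rw [mem_closedBall, dist_eq_norm, sub_sub_cancel_left, norm_neg, norm_smul,
      Real.norm_eq_abs, abs_of_pos (inv_pos.2 hc), mul_inv, inv_inv, mul_assoc,
      inv_mul_cancel₀ (norm_ne_zero_iff.2 hu), mul_one]
  simpa [smul_sub, smul_inv_smul₀ hc.ne'] using hsmul c hc.le _ (hball hmem)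

theorem neg_notMem_of_closedBall_subset (hsmul : ∀ t : ℝ, 0 ≤ t → ∀ z ∈ K, t • z ∈ K)
    (hadd : ∀ x ∈ K, ∀ y ∈ K, x + y ∈ K) (hK : K ≠ univ) (hr : 0 < r)
    (hball : closedBall e r ⊆ K) : -e ∉ K := by
  intro hneg
  refine hK (eq_univ_of_forall fun v => ?_)
  have hv := hadd _ (smul_sub_mem_of_closedBall_subset hsmul hr hball (-v)) _
    (hsmul (r⁻¹ * ‖v‖) (by positivity) _ hneg)
  simpa [norm_neg] using hv

theorem neg_le_of_smul_sub_mem (hsmul : ∀ t : ℝ, 0 ≤ t → ∀ z ∈ K, t • z ∈ K)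
    (hadd : ∀ x ∈ K, ∀ y ∈ K, x + y ∈ K) (hK : K ≠ univ) (hr : 0 < r)
    (hball : closedBall e r ⊆ K) {z : Z} {l : ℝ} (hl : l • e - z ∈ K) :
    -(r⁻¹ * ‖z‖) ≤ l := by
  by_contra! hlt
  set c := l + r⁻¹ * ‖z‖
  have hc : c • e ∈ K := by
    have h := hadd _ hl _ (smul_sub_mem_of_closedBall_subset hsmul hr hball (-z))
    rwa [show l • e - z + ((r⁻¹ * ‖-z‖) • e - -z) = c • e by
      rw [norm_neg, add_smul]; abel] at h
  have hneg := hsmul (-c)⁻¹ (inv_nonneg.2 (by linarith)) _ hc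
  rw [smul_smul, inv_mul_eq_div, div_neg, div_self (by linarith), neg_one_smul] at hneg
  exact neg_notMem_of_closedBall_subset hsmul hadd hK hr hball hneg

theorem scalFn_le_add (hsmul : ∀ t : ℝ, 0 ≤ t → ∀ z ∈ K, t • z ∈ K)
    (hadd : ∀ x ∈ K, ∀ y ∈ K, x + y ∈ K) (hK : K ≠ univ) (hr : 0 < r)
    (hball : closedBall e r ⊆ K) (z w : Z) :
    scalFn K e z ≤ scalFn K e w + r⁻¹ * ‖z - w‖ := by
  have hbdd : BddBelow {l : ℝ | l • e - z ∈ K} :=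
    ⟨_, fun _ hl => neg_le_of_smul_sub_mem hsmul hadd hK hr hball hl⟩
  rw [← sub_le_iff_le_add]
  refine le_csInf ⟨_, smul_sub_mem_of_closedBall_subset hsmul hr hball w⟩ fun l hl => ?_
  rw [sub_le_iff_le_add]
  refine csInf_le hbdd ?_
  have h := hadd _ hl _ (smul_sub_mem_of_closedBall_subset hsmul hr hball (z - w))
  rwa [sub_add_sub_comm, ← add_smul, add_sub_cancel] at h

theorem abs_scalFn_sub_le (hsmul : ∀ t : ℝ, 0 ≤ t → ∀ z ∈ K, t • z ∈ K)
    (hadd : ∀ x ∈ K, ∀ y ∈ K, x + y ∈ K) (hK : K ≠ univ) (hr : 0 < r)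
    (hball : closedBall e r ⊆ K) (z w : Z) :
    |scalFn K e z - scalFn K e w| ≤ r⁻¹ * ‖z - w‖ := by
  have hzw := scalFn_le_add hsmul hadd hK hr hball z w
  have hwz := scalFn_le_add hsmul hadd hK hr hball w z
  rw [norm_sub_rev] at hwz
  exact abs_sub_le_iff.2 ⟨by linarith, by linarith⟩

end Cone

theorem scalFn_lipschitz_general
    {Z : Type*} [NormedAddCommGroup Z] [NormedSpace ℝ Z]
    (K : Set Z) (hKcl : IsClosed K) (hKconv : Convex ℝ K)
    (hKcone : ∀ t : ℝ, 0 ≤ t → ∀ z ∈ K, t • z ∈ K)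
    (hKprop : K ≠ Set.univ) (e : Z) (he : e ∈ interior K) :
    ∀ z w : Z,
      |scalFn K e z - scalFn K e w| ≤ (Metric.infDist e (frontier K))⁻¹ * ‖z - w‖ :=
  abs_scalFn_sub_le hKcone (fun _ hx _ hy => add_mem_of_convex_of_smul_mem hKconv hKcone hx hy)
    hKprop (infDist_frontier_pos he hKprop)
    (closedBall_infDist_frontier_subset hKcl (interior_subset he))

/-- The scalarization functional is globally Lipschitz with constant
`d(e, bd K)⁻¹`. -/
theorem scalFn_lipschitz
    {Z : Type*} [NormedAddCommGroup Z] [NormedSpace ℝ Z] [CompleteSpace Z]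
    (K : Set Z) (hKcl : IsClosed K) (hKconv : Convex ℝ K)
    (hKcone : ∀ t : ℝ, 0 ≤ t → ∀ z ∈ K, t • z ∈ K)
    (hKprop : K ≠ Set.univ) (e : Z) (he : e ∈ interior K) :
    ∀ z w : Z,
      |scalFn K e z - scalFn K e w| ≤ (Metric.infDist e (frontier K))⁻¹ * ‖z - w‖ :=
  scalFn_lipschitz_general K hKcl hKconv hKcone hKprop e he
end

section
/- Let X, Y be Banach spaces, H : X →→ Y a set-valued map, x̄ ∈ X with 0 ∈ H(x̄), and S = {x ∈ X : 0 ∈ H(x)}. Suppose there exist r > 0 and c > 0 such that for every ρ ∈ (0,r) and every (x,y) ∈ Gr H with ‖x − x̄‖ < r and ‖y‖ < r, one has B(y, ρc) ⊆ H(B(x,ρ)) (local linear openness with rate c). Assume also x ↦ d(0,H(x)) is upper semicontinuous at x̄ with d(0,H(x̄)) = 0 in the sense that for every δ > 0 there is a neighborhood of x̄ on which d(0,H(x)) < δ. Then there exists r₀ > 0 such that d(x, S) ≤ c⁻¹ d(0, H(x)) for all x ∈ B(x̄, r₀). -/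
open EMetric

/-- Non-parametric metric regularity from local linear openness: if `H` is open at
linear rate `c` around `(x₀,0)` and `d(0,H(·))` is upper semicontinuous at `x₀` with
value `0`, then `d(x,S) ≤ c⁻¹·d(0,H(x))` near `x₀`, where `S = {x | 0 ∈ H(x)}` and
`d(·,∅) = ∞`. -/
theorem metric_regularity_from_openness
    {X Y : Type*} [NormedAddCommGroup X] [NormedSpace ℝ X] [CompleteSpace X]
    [NormedAddCommGroup Y] [NormedSpace ℝ Y] [CompleteSpace Y]
    (H : X → Set Y) (x₀ : X) (hx₀ : (0 : Y) ∈ H x₀) (r c : ℝ) (hr : 0 < r) (hc : 0 < c)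
    (hopen : ∀ ρ : ℝ, 0 < ρ → ρ < r → ∀ x : X, ∀ y ∈ H x, ‖x - x₀‖ < r → ‖y‖ < r →
      Metric.ball y (ρ * c) ⊆ ⋃ u ∈ Metric.ball x ρ, H u)
    (husc : ∀ δ : ℝ, 0 < δ → ∃ V ∈ nhds x₀, ∀ x ∈ V,
      infEdist (0 : Y) (H x) < ENNReal.ofReal δ) :
    ∃ r₀ > 0, ∀ x ∈ Metric.ball x₀ r₀,
      infEdist x {u : X | 0 ∈ H u} ≤ ENNReal.ofReal c⁻¹ * infEdist (0 : Y) (H x) := by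
  set δ : ℝ := min r (r * c) / 2 with hδdef
  have hmin : 0 < min r (r * c) := lt_min hr (by positivity)
  have hδ : 0 < δ := by positivity
  obtain ⟨V, hV, hVd⟩ := husc δ hδ
  obtain ⟨s, hs, hsV⟩ := Metric.mem_nhds_iff.1 hV
  refine ⟨min s r, lt_min hs hr, ?_⟩
  intro x hx
  have hxb := Metric.mem_ball.1 hx
  have hxV : x ∈ V := hsV (Metric.mem_ball.2 (hxb.trans_le (min_le_left _ _)))
  have hxr : ‖x - x₀‖ < r := by
    rw [dist_eq_norm] at hxb
    exact hxb.trans_le (min_le_right _ _)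
  have hD := hVd x hxV
  set D := infEdist (0 : Y) (H x) with hDdef
  have hDne : D ≠ ⊤ := (hD.trans_le le_top).ne
  set t := D.toReal with htdef
  have ht0 : 0 ≤ t := ENNReal.toReal_nonneg
  have htδ : t < δ := ENNReal.toReal_lt_of_lt_ofReal hD
  have hDt : ENNReal.ofReal t = D := ENNReal.ofReal_toReal hDne
  refine ENNReal.le_of_forall_pos_le_add fun ε hε _ => ?_
  have hεR : (0 : ℝ) < ε := hε
  set ε' : ℝ := min (min (r / 2) (r * c / 2)) (c * ε) with hε'def
  have hε'0 : 0 < ε' := lt_min (lt_min (by positivity) (by positivity)) (by positivity)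
  have hε'a : ε' ≤ r / 2 := (min_le_left _ _).trans (min_le_left _ _)
  have hε'b : ε' ≤ r * c / 2 := (min_le_left _ _).trans (min_le_right _ _)
  have hε'c : ε' ≤ c * ε := min_le_right _ _
  have hδa : δ ≤ r / 2 := by
    rw [hδdef]; gcongr; exact min_le_left _ _
  have hδb : δ ≤ r * c / 2 := by
    rw [hδdef]; gcongr; exact min_le_right _ _
  -- pick y ∈ H x with ‖y‖ < t + ε'
  have hlt : D < ENNReal.ofReal (t + ε') := by
    rw [← hDt]
    exact (ENNReal.ofReal_lt_ofReal_iff (by positivity)).2 (by linarith)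
  obtain ⟨y, hyH, hy⟩ := infEdist_lt_iff.1 hlt
  have hyn : ‖y‖ < t + ε' := by
    rw [edist_dist, dist_zero_left] at hy
    exact (ENNReal.ofReal_lt_ofReal_iff (by positivity)).1 hy
  have hynr : ‖y‖ < r := by linarith
  set ρ : ℝ := c⁻¹ * (t + ε') with hρdef
  have hρ0 : 0 < ρ := by positivity
  have hρc : ρ * c = t + ε' := by
    rw [hρdef]; field_simp
  have hρr : ρ < r := by
    have h1 : t + ε' < r * c := by linarith
    have := (mul_lt_mul_iff_right₀ (a := c⁻¹) (by positivity)).2 h1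
    rw [← hρdef] at this
    calc ρ < c⁻¹ * (r * c) := this
    _ = r := by field_simp
  have h0mem : (0 : Y) ∈ Metric.ball y (ρ * c) := by
    rw [Metric.mem_ball, dist_zero_left, hρc]; exact hyn
  obtain ⟨u, hu⟩ := Set.mem_iUnion.1 (hopen ρ hρ0 hρr x y hyH hxr hynr h0mem)
  obtain ⟨hub, huH⟩ := Set.mem_iUnion.1 hu
  have huS : u ∈ {u : X | 0 ∈ H u} := huH
  have hdux : dist x u < ρ := by
    rw [dist_comm]; exact Metric.mem_ball.1 hub
  calc infEdist x {u : X | 0 ∈ H u} ≤ edist x u := infEdist_le_edist_of_mem huS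
    _ ≤ ENNReal.ofReal ρ := by
        rw [edist_dist]; exact ENNReal.ofReal_le_ofReal hdux.le
    _ = ENNReal.ofReal c⁻¹ * (ENNReal.ofReal t + ENNReal.ofReal ε') := by
        rw [hρdef, ENNReal.ofReal_mul (by positivity), ENNReal.ofReal_add ht0 hε'0.le]
    _ = ENNReal.ofReal c⁻¹ * D + ENNReal.ofReal c⁻¹ * ENNReal.ofReal ε' := by
        rw [mul_add, hDt]
    _ ≤ ENNReal.ofReal c⁻¹ * D + ε := by
        gcongr
        rw [← ENNReal.ofReal_mul (by positivity)]
        calc ENNReal.ofReal (c⁻¹ * ε') ≤ ENNReal.ofReal (c⁻¹ * (c * ε)) := by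
              apply ENNReal.ofReal_le_ofReal; gcongr
        _ = ε := by
              rw [show c⁻¹ * (c * ε) = (ε : ℝ) by field_simp]
              exact ENNReal.ofReal_coe_nnreal
end
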